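/- arXiv:2602.15764 — 3 statements merged into one kernel-verified Lean document; each statement's English description precedes it below -/
import Mathlib

section
/- Fix M > 0 and Λ > 0 with 9ΛM² < 1, and fix a sign σ ∈ {+1, −1}. Then there exist ε > 0 and continuously differentiable functions r, Ω : (−ε, ε) → ℝ with r(0) = 3M and Ω(0) = σ·Ω_ph(M), such that for all a with |a| < ε one has Φ(r(a), Ω(a), a) = 0 and (∂_r Φ)(r(a), Ω(a), a) = 0. -/
/-- The Kerr–de Sitter horizon function `Δ_r(r) = (r² + a²)(1 - Λr²/3) - 2Mr`. -/
noncomputable def Δr (M Λ a r : ℝ) : ℝ :=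
  (r ^ 2 + a ^ 2) * (1 - Λ * r ^ 2 / 3) - 2 * M * r

/-- `Ξ = 1 + Λa²/3`. -/
noncomputable def Ξ (Λ a : ℝ) : ℝ := 1 + Λ * a ^ 2 / 3

/-- Equatorial metric coefficient `g_tt(r, a) = (-Δ_r(r) + a²)/r²`. -/
noncomputable def gtt (M Λ r a : ℝ) : ℝ := (-(Δr M Λ a r) + a ^ 2) / r ^ 2

/-- Equatorial metric coefficient `g_tφ(r, a) = a(Δ_r(r) - (r² + a²))/(r²Ξ)`. -/
noncomputable def gtφ (M Λ r a : ℝ) : ℝ :=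
  a * (Δr M Λ a r - (r ^ 2 + a ^ 2)) / (r ^ 2 * Ξ Λ a)

/-- Equatorial metric coefficient `g_φφ(r, a) = ((r² + a²)² - a²Δ_r(r))/(r²Ξ²)`. -/
noncomputable def gφφ (M Λ r a : ℝ) : ℝ :=
  ((r ^ 2 + a ^ 2) ^ 2 - a ^ 2 * Δr M Λ a r) / (r ^ 2 * (Ξ Λ a) ^ 2)

/-- The equatorial null condition `Φ(r, Ω, a) = g_tt + 2Ω·g_tφ + Ω²·g_φφ`. -/
noncomputable def Φeq (M Λ r Ω a : ℝ) : ℝ :=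
  gtt M Λ r a + 2 * Ω * gtφ M Λ r a + Ω ^ 2 * gφφ M Λ r a

/-- The photon-sphere angular velocity `Ω_ph(M) = √(1 - 9ΛM²)/(3√3·M)`. -/
noncomputable def Ωph (M Λ : ℝ) : ℝ :=
  Real.sqrt (1 - 9 * Λ * M ^ 2) / (3 * Real.sqrt 3 * M)

/-! The numerator `Φnum = r²Ξ²Φ` is quadratic in `Ω` with discriminant `Ξ²r⁴Δ_r`, so where
`Δ_r > 0` the equation `Φ = 0` is solved by the explicit root `Ωcirc σ r a`. Where `Φnum`
vanishes, `∂_rΦ = 0` amounts to `∂_rΦnum = 0`; substituting `Ω = Ωcirc σ r a` turns the system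
into the single equation `circEq (a, r) = 0`. At `a = 0` it reads `2(r - 3M) = 0`, whose
`r`-derivative `2` does not vanish, so the implicit function theorem yields a `C¹` branch
`r(a)` through `3M`, and `Ω(a) = Ωcirc σ (r a) a`. -/

open Filter Topology

theorem exists_contDiffAt_implicitFunction {𝕜 : Type*} [RCLike 𝕜] {E : Type*}
    [NormedAddCommGroup E] [NormedSpace 𝕜 E] [CompleteSpace E] {f : E × 𝕜 → 𝕜} {u : E × 𝕜}
    {n : WithTop ℕ∞} {c : 𝕜} (hf : ContDiffAt 𝕜 n f u) (hn : n ≠ 0)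
    (hc : HasDerivAt (fun y => f (u.1, y)) c u.2) (hc0 : c ≠ 0) :
    ∃ ψ : E → 𝕜, ψ u.1 = u.2 ∧ ContDiffAt 𝕜 n ψ u.1 ∧ ∀ᶠ x in 𝓝 u.1, f (x, ψ x) = f u := by
  have hpartial : fderiv 𝕜 f u ∘L .inr 𝕜 E 𝕜 =
      (ContinuousLinearEquiv.unitsEquivAut 𝕜 (Units.mk0 c hc0) : 𝕜 →L[𝕜] 𝕜) := by
    have h := (hf.hasStrictFDerivAt hn).hasFDerivAt.comp u.2
      (hasFDerivAt_prodMk_right (𝕜 := 𝕜) u.1 u.2)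
    ext
    simp [← hc.hasFDerivAt.unique h]
  have hinv : (fderiv 𝕜 f u ∘L .inr 𝕜 E 𝕜).IsInvertible :=
    hpartial ▸ ContinuousLinearMap.isInvertible_equiv
  exact ⟨hf.implicitFunction hn hinv, hf.implicitFunction_apply_self hn hinv,
    hf.contDiffAt_implicitFunction hn hinv, hf.eventually_apply_implicitFunction hn hinv⟩

noncomputable def ΔrDeriv (M Λ a r : ℝ) : ℝ :=
  2 * r * (1 - Λ * r ^ 2 / 3) - (r ^ 2 + a ^ 2) * (2 * Λ * r / 3) - 2 * M

noncomputable def Φnum (M Λ r Ω a : ℝ) : ℝ :=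
  Ξ Λ a ^ 2 * (-Δr M Λ a r + a ^ 2) + 2 * Ω * Ξ Λ a * a * (Δr M Λ a r - (r ^ 2 + a ^ 2))
    + Ω ^ 2 * ((r ^ 2 + a ^ 2) ^ 2 - a ^ 2 * Δr M Λ a r)

noncomputable def ΦnumDeriv (M Λ r Ω a : ℝ) : ℝ :=
  Ξ Λ a ^ 2 * -ΔrDeriv M Λ a r + 2 * Ω * Ξ Λ a * a * (ΔrDeriv M Λ a r - 2 * r)
    + Ω ^ 2 * (4 * r * (r ^ 2 + a ^ 2) - a ^ 2 * ΔrDeriv M Λ a r)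

noncomputable def Ωcirc (M Λ σ r a : ℝ) : ℝ :=
  Ξ Λ a * (a * (r ^ 2 + a ^ 2 - Δr M Λ a r) + σ * r ^ 2 * Real.sqrt (Δr M Λ a r))
    / ((r ^ 2 + a ^ 2) ^ 2 - a ^ 2 * Δr M Λ a r)

/-- The point is `p = (a, r)`, parameter first, as `ContDiffAt.implicitFunction` expects. -/
noncomputable def circEq (M Λ σ : ℝ) (p : ℝ × ℝ) : ℝ :=
  ΦnumDeriv M Λ p.2 (Ωcirc M Λ σ p.2 p.1) p.1

theorem hasDerivAt_Δr (M Λ a r : ℝ) :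
    HasDerivAt (fun ρ => Δr M Λ a ρ) (ΔrDeriv M Λ a r) r := by
  have hs : HasDerivAt (fun ρ => ρ ^ 2 + a ^ 2) (2 * r) r := by
    simpa using (hasDerivAt_pow 2 r).add_const (a ^ 2)
  have hl : HasDerivAt (fun ρ => 1 - Λ * ρ ^ 2 / 3) (-(Λ * (2 * r) / 3)) r := by
    simpa using (((hasDerivAt_pow 2 r).const_mul Λ).div_const 3).const_sub 1
  exact ((hs.mul hl).sub ((hasDerivAt_id r).const_mul (2 * M))).congr_deriv
    (by unfold ΔrDeriv; ring)

theorem hasDerivAt_Φnum (M Λ r Ω a : ℝ) :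
    HasDerivAt (fun ρ => Φnum M Λ ρ Ω a) (ΦnumDeriv M Λ r Ω a) r := by
  have hΔ := hasDerivAt_Δr M Λ a r
  have hs : HasDerivAt (fun ρ => ρ ^ 2 + a ^ 2) (2 * r) r := by
    simpa using (hasDerivAt_pow 2 r).add_const (a ^ 2)
  exact ((((hΔ.neg.add_const (a ^ 2)).const_mul (Ξ Λ a ^ 2)).add
    ((hΔ.sub hs).const_mul (2 * Ω * Ξ Λ a * a))).add
    (((hs.pow 2).sub (hΔ.const_mul (a ^ 2))).const_mul (Ω ^ 2))).congr_deriv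
    (by unfold ΦnumDeriv; push_cast; ring)

section

variable {M Λ : ℝ}

theorem Φeq_eq_Φnum_div {r Ω a : ℝ} (hΞ : Ξ Λ a ≠ 0) :
    Φeq M Λ r Ω a = Φnum M Λ r Ω a / (r ^ 2 * Ξ Λ a ^ 2) := by
  unfold Φeq gtt gtφ gφφ Φnum
  field_simp

theorem Φeq_eq_zero_and_hasDerivAt_zero {r Ω a : ℝ} (hr : r ≠ 0) (hΞ : Ξ Λ a ≠ 0)
    (hP : Φnum M Λ r Ω a = 0) (hQ : ΦnumDeriv M Λ r Ω a = 0) :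
    Φeq M Λ r Ω a = 0 ∧ HasDerivAt (fun ρ => Φeq M Λ ρ Ω a) 0 r := by
  refine ⟨by rw [Φeq_eq_Φnum_div hΞ, hP, zero_div], ?_⟩
  have hden : HasDerivAt (fun ρ => ρ ^ 2 * Ξ Λ a ^ 2) (2 * r * Ξ Λ a ^ 2) r := by
    simpa using (hasDerivAt_pow 2 r).mul_const (Ξ Λ a ^ 2)
  have h := (hasDerivAt_Φnum M Λ r Ω a).div hden (by positivity)
  rw [hP, hQ] at h
  simp only [zero_mul, sub_zero, zero_div] at h
  exact h.congr_of_eventuallyEq (Eventually.of_forall fun ρ => Φeq_eq_Φnum_div hΞ)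

theorem Φnum_Ωcirc {σ r a : ℝ} (hσ : σ ^ 2 = 1) (hΔ : 0 ≤ Δr M Λ a r)
    (hA : (r ^ 2 + a ^ 2) ^ 2 - a ^ 2 * Δr M Λ a r ≠ 0) :
    Φnum M Λ r (Ωcirc M Λ σ r a) a = 0 := by
  have hΩ := div_mul_cancel₀
    (Ξ Λ a * (a * (r ^ 2 + a ^ 2 - Δr M Λ a r) + σ * r ^ 2 * Real.sqrt (Δr M Λ a r))) hA
  rw [← Ωcirc] at hΩ
  have hsq := Real.sq_sqrt hΔ
  refine (mul_eq_zero.mp ?_).resolve_right hA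
  unfold Φnum
  generalize Ωcirc M Λ σ r a = Ω at hΩ ⊢
  generalize Real.sqrt (Δr M Λ a r) = s at hΩ hsq
  generalize Δr M Λ a r = D at hΩ hsq ⊢
  -- With `A Ω² + 2BΩ + C := Φnum`: `A · Φnum = (AΩ + B)² - (B² - AC)` and `B² - AC = Ξ²r⁴D`.
  linear_combination
    (Ω * ((r ^ 2 + a ^ 2) ^ 2 - a ^ 2 * D) + Ξ Λ a * (a * (D - (r ^ 2 + a ^ 2)) + σ * r ^ 2 * s))
      * hΩ + Ξ Λ a ^ 2 * r ^ 4 * s ^ 2 * hσ + Ξ Λ a ^ 2 * r ^ 4 * hsq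

theorem contDiffAt_Ωcirc (σ : ℝ) {n : WithTop ℕ∞} {p : ℝ × ℝ} (hΔ : Δr M Λ p.1 p.2 ≠ 0)
    (hA : (p.2 ^ 2 + p.1 ^ 2) ^ 2 - p.1 ^ 2 * Δr M Λ p.1 p.2 ≠ 0) :
    ContDiffAt ℝ n (fun q : ℝ × ℝ => Ωcirc M Λ σ q.2 q.1) p := by
  have hΔr : ContDiff ℝ n (fun q : ℝ × ℝ => Δr M Λ q.1 q.2) := by unfold Δr; fun_prop
  have hsqrt : ContDiffAt ℝ n (fun q : ℝ × ℝ => Real.sqrt (Δr M Λ q.1 q.2)) p :=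
    (Real.contDiffAt_sqrt hΔ).comp p hΔr.contDiffAt
  unfold Ωcirc Ξ
  exact ContDiffAt.div (by fun_prop) (by fun_prop) hA

theorem contDiffAt_circEq (σ : ℝ) {n : WithTop ℕ∞} {p : ℝ × ℝ} (hΔ : Δr M Λ p.1 p.2 ≠ 0)
    (hA : (p.2 ^ 2 + p.1 ^ 2) ^ 2 - p.1 ^ 2 * Δr M Λ p.1 p.2 ≠ 0) :
    ContDiffAt ℝ n (circEq M Λ σ) p := by
  have := contDiffAt_Ωcirc σ (n := n) hΔ hA
  unfold circEq ΦnumDeriv ΔrDeriv Ξ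
  fun_prop

theorem circEq_zero_left {σ r : ℝ} (hσ : σ ^ 2 = 1) (hr : r ≠ 0) (hΔ : 0 ≤ Δr M Λ 0 r) :
    circEq M Λ σ (0, r) = 2 * (r - 3 * M) := by
  have hsq := Real.sq_sqrt hΔ
  unfold circEq ΦnumDeriv Ωcirc ΔrDeriv Ξ
  generalize Real.sqrt (Δr M Λ 0 r) = s at hsq
  unfold Δr at hsq
  field_simp
  linear_combination (108 * r ^ 7 * s ^ 2) * hσ + 108 * r ^ 7 * hsq

theorem hasDerivAt_circEq_zero_left {σ : ℝ} (hσ : σ ^ 2 = 1) (hM : 0 < M)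
    (hΔ : 0 < Δr M Λ 0 (3 * M)) :
    HasDerivAt (fun r => circEq M Λ σ (0, r)) 2 (3 * M) := by
  have hΔc : Continuous fun r => Δr M Λ 0 r := by unfold Δr; fun_prop
  have hopen : IsOpen {r : ℝ | 0 < r ∧ 0 < Δr M Λ 0 r} :=
    isOpen_Ioi.inter (isOpen_Ioi.preimage hΔc)
  have hev : (fun r => 2 * (r - 3 * M)) =ᶠ[𝓝 (3 * M)] fun r => circEq M Λ σ (0, r) := by
    filter_upwards [hopen.mem_nhds ⟨by positivity, hΔ⟩] with r hr
    exact (circEq_zero_left hσ hr.1.ne' hr.2.le).symm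
  exact ((((hasDerivAt_id _).sub_const _).const_mul 2).congr_of_eventuallyEq hev.symm).congr_deriv
    (by simp)

theorem Δr_zero_three_mul : Δr M Λ 0 (3 * M) = 3 * M ^ 2 * (1 - 9 * Λ * M ^ 2) := by
  unfold Δr; ring

theorem Δr_zero_three_mul_pos (hM : 0 < M) (hsub : 9 * Λ * M ^ 2 < 1) :
    0 < Δr M Λ 0 (3 * M) := by
  have : 0 < 1 - 9 * Λ * M ^ 2 := by linarith
  rw [Δr_zero_three_mul]
  positivity

theorem Ωcirc_three_mul_zero (σ : ℝ) (hM : 0 < M) :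
    Ωcirc M Λ σ (3 * M) 0 = σ * Ωph M Λ := by
  have hsqrt :
      Real.sqrt (Δr M Λ 0 (3 * M)) = Real.sqrt 3 * M * Real.sqrt (1 - 9 * Λ * M ^ 2) := by
    rw [Δr_zero_three_mul, Real.sqrt_mul (by positivity), Real.sqrt_mul (by norm_num),
      Real.sqrt_sq hM.le]
  have h3 : Real.sqrt 3 ^ 2 = 3 := Real.sq_sqrt (by norm_num)
  unfold Ωcirc Ωph Ξ
  rw [hsqrt]
  generalize Real.sqrt (1 - 9 * Λ * M ^ 2) = t
  field_simp
  linear_combination (27 * σ * M ^ 4 * t) * h3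

theorem exists_circEq_eq_zero {σ : ℝ} (hσ : σ ^ 2 = 1) (hM : 0 < M)
    (hsub : 9 * Λ * M ^ 2 < 1) :
    ∃ ψ : ℝ → ℝ, ψ 0 = 3 * M ∧ ContDiffAt ℝ 1 ψ 0 ∧ ∀ᶠ a in 𝓝 0, circEq M Λ σ (a, ψ a) = 0 := by
  have hΔ := Δr_zero_three_mul_pos hM hsub
  have hcirc : circEq M Λ σ (0, 3 * M) = 0 := by
    rw [circEq_zero_left hσ (by positivity) hΔ.le]; ring
  have hA : ((3 * M) ^ 2 + 0 ^ 2) ^ 2 - 0 ^ 2 * Δr M Λ 0 (3 * M) ≠ 0 := by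
    simp [hM.ne']
  obtain ⟨ψ, hψ0, hψ, hψeq⟩ := exists_contDiffAt_implicitFunction
    (contDiffAt_circEq σ (n := 1) (p := (0, 3 * M)) hΔ.ne' hA) one_ne_zero
    (hasDerivAt_circEq_zero_left hσ hM hΔ) two_ne_zero
  exact ⟨ψ, hψ0, hψ, hψeq.mono fun a ha => ha.trans hcirc⟩

theorem eventually_circular_of_circEq {σ : ℝ} {ψ : ℝ → ℝ} (hσ : σ ^ 2 = 1) (hM : 0 < M)
    (hsub : 9 * Λ * M ^ 2 < 1) (hψ0 : ψ 0 = 3 * M) (hψ : ContDiffAt ℝ 1 ψ 0)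
    (hψeq : ∀ᶠ a in 𝓝 0, circEq M Λ σ (a, ψ a) = 0) :
    ∀ᶠ a in 𝓝 0, ContDiffAt ℝ 1 ψ a ∧ ContDiffAt ℝ 1 (fun b => Ωcirc M Λ σ (ψ b) b) a ∧
      Φeq M Λ (ψ a) (Ωcirc M Λ σ (ψ a) a) a = 0 ∧
      HasDerivAt (fun ρ => Φeq M Λ ρ (Ωcirc M Λ σ (ψ a) a) a) 0 (ψ a) := by
  have hr : ∀ᶠ a in 𝓝 0, 0 < ψ a :=
    hψ.continuousAt.eventually_const_lt (by rw [hψ0]; positivity)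
  have hΔ : ∀ᶠ a in 𝓝 0, 0 < Δr M Λ a (ψ a) :=
    (show ContinuousAt (fun a => Δr M Λ a (ψ a)) 0 by unfold Δr; fun_prop).eventually_const_lt
      (by dsimp only; rw [hψ0]; exact Δr_zero_three_mul_pos hM hsub)
  have hA : ∀ᶠ a in 𝓝 0, 0 < (ψ a ^ 2 + a ^ 2) ^ 2 - a ^ 2 * Δr M Λ a (ψ a) :=
    (show ContinuousAt (fun a => (ψ a ^ 2 + a ^ 2) ^ 2 - a ^ 2 * Δr M Λ a (ψ a)) 0 by
      unfold Δr; fun_prop).eventually_const_lt (by dsimp only; rw [hψ0]; norm_num; positivity)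
  have hΞ : ∀ᶠ a in 𝓝 0, Ξ Λ a ≠ 0 :=
    (show ContinuousAt (Ξ Λ) 0 by unfold Ξ; fun_prop).eventually_ne (by simp [Ξ])
  filter_upwards [hψ.eventually (by simp), hr, hΔ, hA, hΞ, hψeq] with a hψa hra hΔa hAa hΞa hcirc
  have hΩ := (contDiffAt_Ωcirc σ (p := (a, ψ a)) hΔa.ne' hAa.ne').comp a
    (contDiffAt_id.prodMk hψa)
  exact ⟨hψa, hΩ,
    Φeq_eq_zero_and_hasDerivAt_zero hra.ne' hΞa (Φnum_Ωcirc hσ hΔa.le hAa.ne') hcirc⟩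

end

theorem stmt_4_general (M Λ : ℝ) (hM : 0 < M) (hsub : 9 * Λ * M ^ 2 < 1)
    (σ : ℝ) (hσ : σ = 1 ∨ σ = -1) :
    ∃ ε > 0, ∃ r Ω : ℝ → ℝ,
      ContDiffOn ℝ 1 r (Set.Ioo (-ε) ε) ∧ ContDiffOn ℝ 1 Ω (Set.Ioo (-ε) ε) ∧
      r 0 = 3 * M ∧ Ω 0 = σ * Ωph M Λ ∧
      ∀ a : ℝ, |a| < ε →
        Φeq M Λ (r a) (Ω a) a = 0 ∧
        HasDerivAt (fun ρ => Φeq M Λ ρ (Ω a) a) 0 (r a) := by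
  have hσ2 : σ ^ 2 = 1 := by rcases hσ with rfl | rfl <;> norm_num
  obtain ⟨ψ, hψ0, hψ, hψeq⟩ := exists_circEq_eq_zero hσ2 hM hsub
  obtain ⟨ε, hε, hball⟩ := Metric.eventually_nhds_iff.mp
    (eventually_circular_of_circEq hσ2 hM hsub hψ0 hψ hψeq)
  have hmem : ∀ a ∈ Set.Ioo (-ε) ε, dist a 0 < ε := fun a ha => by
    rwa [Real.dist_0_eq_abs, abs_lt]
  refine ⟨ε, hε, ψ, fun a => Ωcirc M Λ σ (ψ a) a, fun a ha => ?_, fun a ha => ?_, hψ0,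
    by simp only [hψ0, Ωcirc_three_mul_zero σ hM], fun a ha => ?_⟩
  · exact (hball (hmem a ha)).1.contDiffWithinAt
  · exact (hball (hmem a ha)).2.1.contDiffWithinAt
  · exact (hball (by rwa [Real.dist_0_eq_abs])).2.2

/-- For `M > 0`, `Λ > 0` with `9ΛM² < 1` and a sign `σ ∈ {+1, -1}`, there
exist `ε > 0` and continuously differentiable functions `r, Ω : (-ε, ε) → ℝ` with
`r(0) = 3M`, `Ω(0) = σ·Ω_ph(M)`, solving `Φ(r(a), Ω(a), a) = 0` and
`∂_rΦ(r(a), Ω(a), a) = 0` for all `|a| < ε`. -/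
theorem stmt_4 (M Λ : ℝ) (hM : 0 < M) (hΛ : 0 < Λ) (hsub : 9 * Λ * M ^ 2 < 1)
    (σ : ℝ) (hσ : σ = 1 ∨ σ = -1) :
    ∃ ε > 0, ∃ r Ω : ℝ → ℝ,
      ContDiffOn ℝ 1 r (Set.Ioo (-ε) ε) ∧ ContDiffOn ℝ 1 Ω (Set.Ioo (-ε) ε) ∧
      r 0 = 3 * M ∧ Ω 0 = σ * Ωph M Λ ∧
      ∀ a : ℝ, |a| < ε →
        Φeq M Λ (r a) (Ω a) a = 0 ∧
        HasDerivAt (fun ρ => Φeq M Λ ρ (Ω a) a) 0 (r a) :=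
  stmt_4_general M Λ hM hsub σ hσ
end

section
/- Fix M > 0 and Λ > 0 with 9ΛM² < 1 and a sign σ ∈ {+1, −1}. Suppose ε > 0 and r, Ω : (−ε, ε) → ℝ are differentiable at 0 with r(0) = 3M and Ω(0) = σ·Ω_ph(M), and suppose Φ(r(a), Ω(a), a) = 0 for all |a| < ε. Then the derivative of Ω at 0 equals c_Z(M) := (2 + 9ΛM²)/(27M²). -/
/-!
Multiplying the null condition by `r²Ξ²` turns it into a polynomial identity
`N(r(a), Ω(a), a) = 0`, and differentiating at `a = 0` gives
`∂_r N · r'(0) + ∂_Ω N · Ω'(0) + ∂_a N = 0` at `(3M, σΩ_ph, 0)`.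
There `∂_r N = 4r³Ω² - (2r - 4Λr³/3 - 2M)` vanishes, because `27M²Ω_ph² = 1 - 9ΛM²` is exactly
the circular-photon-orbit condition, so the unknown `r'(0)` drops out; the remaining terms
`∂_Ω N = 162M⁴Ω` and `∂_a N = -6M²Ω(2 + 9ΛM²)` give `Ω'(0) = (2 + 9ΛM²)/(27M²)`.
-/

open Filter Topology

noncomputable def nullPoly (M Λ r Ω a : ℝ) : ℝ :=
  (-Δr M Λ a r + a ^ 2) * Ξ Λ a ^ 2 + 2 * Ω * (a * (Δr M Λ a r - (r ^ 2 + a ^ 2))) * Ξ Λ a +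
    Ω ^ 2 * ((r ^ 2 + a ^ 2) ^ 2 - a ^ 2 * Δr M Λ a r)

lemma Ξ_pos {Λ : ℝ} (hΛ : 0 ≤ Λ) (a : ℝ) : 0 < Ξ Λ a := by
  unfold Ξ; positivity

lemma Φeq_mul_eq_nullPoly {M Λ r Ω a : ℝ} (hr : r ≠ 0) (hΞ : Ξ Λ a ≠ 0) :
    Φeq M Λ r Ω a * (r ^ 2 * Ξ Λ a ^ 2) = nullPoly M Λ r Ω a := by
  unfold Φeq gtt gtφ gφφ nullPoly
  field_simp

lemma nullPoly_comp_eventuallyEq_zero {M Λ ε : ℝ} {r Ω : ℝ → ℝ} (hΛ : 0 ≤ Λ) (hε : 0 < ε)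
    (hr : ContinuousAt r 0) (hr0 : r 0 ≠ 0)
    (horbit : ∀ a : ℝ, |a| < ε → Φeq M Λ (r a) (Ω a) a = 0) :
    (fun a => nullPoly M Λ (r a) (Ω a) a) =ᶠ[𝓝 0] fun _ => 0 := by
  have hsmall : ∀ᶠ a in 𝓝 (0 : ℝ), |a| < ε :=
    (continuous_abs.tendsto' 0 0 abs_zero).eventually (gt_mem_nhds hε)
  filter_upwards [hr.eventually_ne hr0, hsmall] with a hra ha
  rw [← Φeq_mul_eq_nullPoly hra (Ξ_pos hΛ a).ne', horbit a ha, zero_mul]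

lemma hasDerivAt_nullPoly_comp {M Λ : ℝ} {r Ω : ℝ → ℝ} {r' Ω' : ℝ}
    (hr : HasDerivAt r r' 0) (hΩ : HasDerivAt Ω Ω' 0) :
    HasDerivAt (fun a => nullPoly M Λ (r a) (Ω a) a)
      ((4 * r 0 ^ 3 * Ω 0 ^ 2 - (2 * r 0 - 4 * Λ * r 0 ^ 3 / 3 - 2 * M)) * r'
        + 2 * r 0 ^ 4 * Ω 0 * Ω' + 2 * Ω 0 * (Δr M Λ 0 (r 0) - r 0 ^ 2)) 0 := by
  have ha := hasDerivAt_id' (0 : ℝ)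
  have ha2 := hasDerivAt_pow 2 (0 : ℝ)
  have hr2 := hr.pow 2
  have hS := hr2.add ha2
  have hΔ := (hS.mul ((hasDerivAt_const _ 1).sub ((hr2.const_mul Λ).div_const 3))).sub
    (hr.const_mul (2 * M))
  have hΞ := (hasDerivAt_const _ 1).add ((ha2.const_mul Λ).div_const 3)
  have h := (((hΔ.neg.add ha2).mul (hΞ.pow 2)).add
      (((hΩ.const_mul 2).mul (ha.mul (hΔ.sub hS))).mul hΞ)).add
      ((hΩ.pow 2).mul ((hS.pow 2).sub (ha2.mul hΔ)))
  unfold nullPoly Δr Ξ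
  refine h.congr_deriv ?_
  simp only [Pi.add_apply, Pi.sub_apply, Pi.mul_apply, Pi.pow_apply, Pi.neg_apply]
  ring

lemma sq_mul_Ωph_sq {M Λ : ℝ} (hM : M ≠ 0) (hsub : 9 * Λ * M ^ 2 ≤ 1) :
    27 * M ^ 2 * Ωph M Λ ^ 2 = 1 - 9 * Λ * M ^ 2 := by
  rw [Ωph, div_pow, mul_pow, mul_pow, Real.sq_sqrt (by linarith), Real.sq_sqrt (by norm_num)]
  field_simp
  ring

lemma nullPoly_deriv_r_eq_zero_of_photonSphere {M Λ Ω : ℝ} (h : 27 * M ^ 2 * Ω ^ 2 = 1 - 9 * Λ * M ^ 2) :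
    4 * (3 * M) ^ 3 * Ω ^ 2 - (2 * (3 * M) - 4 * Λ * (3 * M) ^ 3 / 3 - 2 * M) = 0 := by
  linear_combination 4 * M * h

/-- If `r, Ω` are differentiable at `0` with `r(0) = 3M`,
`Ω(0) = σ·Ω_ph(M)` (`σ ∈ {+1, -1}`), and `Φ(r(a), Ω(a), a) = 0` for all `|a| < ε`,
then `Ω'(0) = c_Z(M) = (2 + 9ΛM²)/(27M²)` (the linear Zeeman splitting coefficient). -/
theorem stmt_6 (M Λ : ℝ) (hM : 0 < M) (hΛ : 0 < Λ) (hsub : 9 * Λ * M ^ 2 < 1)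
    (σ : ℝ) (hσ : σ = 1 ∨ σ = -1)
    (ε : ℝ) (hε : 0 < ε) (r Ω : ℝ → ℝ)
    (hr : DifferentiableAt ℝ r 0) (hΩ : DifferentiableAt ℝ Ω 0)
    (hr0 : r 0 = 3 * M) (hΩ0 : Ω 0 = σ * Ωph M Λ)
    (horbit : ∀ a : ℝ, |a| < ε → Φeq M Λ (r a) (Ω a) a = 0) :
    deriv Ω 0 = (2 + 9 * Λ * M ^ 2) / (27 * M ^ 2) := by
  have hN : HasDerivAt (fun a => nullPoly M Λ (r a) (Ω a) a) 0 0 :=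
    (hasDerivAt_const 0 0).congr_of_eventuallyEq <| nullPoly_comp_eventuallyEq_zero hΛ.le hε
      hr.continuousAt (by rw [hr0]; positivity) horbit
  have key := (hasDerivAt_nullPoly_comp hr.hasDerivAt hΩ.hasDerivAt).unique hN
  have hσ2 : σ ^ 2 = 1 := by rcases hσ with rfl | rfl <;> norm_num
  have hΩ0sq : 27 * M ^ 2 * Ω 0 ^ 2 = 1 - 9 * Λ * M ^ 2 := by
    rw [hΩ0, mul_pow, hσ2, one_mul, sq_mul_Ωph_sq hM.ne' hsub.le]
  have hΩ0ne : Ω 0 ≠ 0 := by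
    rintro h
    rw [h] at hΩ0sq
    linarith
  rw [hr0, nullPoly_deriv_r_eq_zero_of_photonSphere hΩ0sq, Δr] at key
  rw [eq_div_iff (by positivity)]
  refine mul_left_cancel₀ (mul_ne_zero (by positivity : 6 * M ^ 2 ≠ 0) hΩ0ne) ?_
  linear_combination key
end

section
/- Let α₁ ≤ β₁ and α₂ ≤ β₂ be real numbers and let R := [α₁, β₁] × [α₂, β₂] ⊂ ℝ². Let F = (F₁, F₂) : ℝ² → ℝ² be continuously differentiable on an open set containing R. Assume that at every point x ∈ R the Jacobian matrix DF(x) is a P-matrix, i.e. ∂F₁/∂x₁(x) > 0, ∂F₂/∂x₂(x) > 0 and det DF(x) > 0. Then F is injective on R. -/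
/-!
Reflecting the second coordinate conjugates a P-matrix into a P-matrix, so it suffices to show
that `a ≤ b` (product order) and `F b ≤ F a` force `b = a`. A positive functional `ℓ` with
`ℓ ∘ DF(a)` positive on the closed positive quadrant shows that no `z ≥ a` near `a`, `z ≠ a`, has
`F z ≤ F a`. Hence, if `b ≠ a`, the compact set of `z ∈ [a, b]` with `F z ≤ F a` away from `a`
contains a point `z` minimising `z.1 + z.2`. Positivity of the diagonal partials along the two
edges through `a` puts `z` strictly above `a` in both coordinates, and since `DF(z)` maps some
positive vector `v` to a positive vector, `z - t • v` is a lower point of the same set for small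
`t > 0`.
-/

open Set Filter Topology

namespace GaleNikaido

def IsPMatrix (L : ℝ × ℝ →L[ℝ] ℝ × ℝ) : Prop :=
  0 < (L (1, 0)).1 ∧ 0 < (L (0, 1)).2 ∧
    0 < (L (1, 0)).1 * (L (0, 1)).2 - (L (0, 1)).1 * (L (1, 0)).2

lemma exists_pos_mulVec_pos {p q r s : ℝ} (hp : 0 < p) (hs : 0 < s) (hdet : 0 < p * s - q * r) :
    ∃ d₁ d₂ : ℝ, 0 < d₁ ∧ 0 < d₂ ∧ 0 < p * d₁ + q * d₂ ∧ 0 < r * d₁ + s * d₂ := by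
  rcases le_or_gt 0 q with hq | hq
  · exact ⟨s, |r| + 1, hs, by positivity,
      by nlinarith [mul_pos hp hs, mul_nonneg hq (abs_nonneg r)], by nlinarith [neg_abs_le r]⟩
  rcases le_or_gt 0 r with hr | hr
  · exact ⟨|q| + 1, p, by positivity, hp, by nlinarith [abs_of_neg hq],
      by nlinarith [mul_pos hs hp, mul_nonneg hr (abs_nonneg q)]⟩
  -- `p d₁ + q d₂ = -q (p s - q r)` and `r d₁ + s d₂ = s (p s - q r)`
  · exact ⟨-2 * q * s, q * r + p * s, by nlinarith, by nlinarith, by nlinarith, by nlinarith⟩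

lemma apply_mk (L : ℝ × ℝ →L[ℝ] ℝ × ℝ) (u v : ℝ) :
    L (u, v) = u • L (1, 0) + v • L (0, 1) := by
  rw [← map_smul, ← map_smul, ← map_add]
  simp

namespace IsPMatrix

variable {L : ℝ × ℝ →L[ℝ] ℝ × ℝ}

lemma exists_pos_apply_pos (hL : IsPMatrix L) :
    ∃ v : ℝ × ℝ, 0 < v.1 ∧ 0 < v.2 ∧ 0 < (L v).1 ∧ 0 < (L v).2 := by
  obtain ⟨d₁, d₂, h₁, h₂, h₃, h₄⟩ := exists_pos_mulVec_pos hL.1 hL.2.1 hL.2.2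
  refine ⟨(d₁, d₂), h₁, h₂, ?_, ?_⟩ <;>
    simp only [apply_mk L d₁, Prod.fst_add, Prod.snd_add, Prod.smul_fst, Prod.smul_snd,
      smul_eq_mul] <;> linarith

lemma exists_monotone_functional (hL : IsPMatrix L) :
    ∃ ℓ : ℝ × ℝ →L[ℝ] ℝ, Monotone ℓ ∧ 0 < ℓ (L (1, 0)) ∧ 0 < ℓ (L (0, 1)) := by
  -- the weights of `ℓ` form a positive vector sent to a positive one by the transpose of `L`
  obtain ⟨w₁, w₂, h₁, h₂, h₃, h₄⟩ :=
    exists_pos_mulVec_pos hL.1 hL.2.1 (by linarith [hL.2.2] : 0 < _ - (L (1, 0)).2 * (L (0, 1)).1)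
  refine ⟨w₁ • ContinuousLinearMap.fst ℝ ℝ ℝ + w₂ • ContinuousLinearMap.snd ℝ ℝ ℝ,
    fun u v huv => ?_, ?_, ?_⟩ <;>
    simp only [add_apply, smul_apply,
      ContinuousLinearMap.coe_fst', ContinuousLinearMap.coe_snd', smul_eq_mul]
  · nlinarith [huv.1, huv.2]
  · linarith
  · linarith

end IsPMatrix

section Calculus

variable {E G : Type*} [NormedAddCommGroup E] [NormedSpace ℝ E]
  [NormedAddCommGroup G] [NormedSpace ℝ G]

lemma lt_of_forall_segment_pos {f : E → G} {f' : E → E →L[ℝ] G} {s : Set E} {x y : E}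
    (hs : Convex ℝ s) (hf : ∀ z ∈ s, HasFDerivWithinAt f (f' z) s z) (ℓ : G →L[ℝ] ℝ)
    (hx : x ∈ s) (hy : y ∈ s) (h : ∀ ξ ∈ segment ℝ x y, 0 < ℓ (f' ξ (y - x))) :
    ℓ (f x) < ℓ (f y) := by
  obtain ⟨ξ, hξ, heq⟩ := domain_mvt (f := ℓ ∘ f) (f' := fun z => ℓ.comp (f' z))
    (fun z hz => ℓ.hasFDerivAt.comp_hasFDerivWithinAt z (hf z hz)) hs hx hy
  have := h ξ hξ
  simp only [Function.comp_apply, ContinuousLinearMap.comp_apply] at heq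
  linarith

lemma eventually_lt_of_hasFDerivWithinAt {g : E → ℝ} {g' : E →L[ℝ] ℝ} {s C : Set E} {a : E}
    {m : ℝ} (hg : HasFDerivWithinAt g g' s a) (hm : 0 < m) (hC : ∀ u ∈ C, m * ‖u‖ ≤ g' u) :
    ∀ᶠ z in 𝓝[s] a, z - a ∈ C → z ≠ a → g a < g z := by
  filter_upwards [hg.isLittleO.def (half_pos hm)] with z hz hzC hza
  have hpos : 0 < ‖z - a‖ := norm_pos_iff.2 (sub_ne_zero.2 hza)
  have hC' := hC _ hzC
  rw [Real.norm_eq_abs] at hz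
  nlinarith [neg_abs_le (g z - g a - g' (z - a))]

lemma eventually_nhdsGT_lt_of_hasDerivAt {g : ℝ → ℝ} {d t₀ : ℝ} (hg : HasDerivAt g d t₀)
    (hd : d < 0) : ∀ᶠ t in 𝓝[>] t₀, g t < g t₀ := by
  have h := eventually_lt_of_hasFDerivWithinAt (s := Ioi t₀) (C := Ici 0)
    hg.neg.hasFDerivAt.hasFDerivWithinAt (neg_pos.2 hd)
    fun u (hu : 0 ≤ u) => by simp [abs_of_nonneg hu, mul_comm]
  filter_upwards [h, self_mem_nhdsWithin] with t ht (htpos : t₀ < t)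
  simpa using ht (sub_nonneg.2 htpos.le) htpos.ne'

end Calculus

variable {F : ℝ × ℝ → ℝ × ℝ} {L : ℝ × ℝ →L[ℝ] ℝ × ℝ} {a z : ℝ × ℝ}

lemma IsPMatrix.eventually_not_map_le (hL : IsPMatrix L) (hF : HasFDerivAt F L a) :
    ∀ᶠ z in 𝓝 a, a ≤ z → z ≠ a → ¬ F z ≤ F a := by
  obtain ⟨ℓ, hℓ, hc₁, hc₂⟩ := hL.exists_monotone_functional
  set m := min (ℓ (L (1, 0))) (ℓ (L (0, 1)))
  have hcone (u : ℝ × ℝ) (hu : 0 ≤ u) : m * ‖u‖ ≤ (ℓ ∘L L) u := by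
    obtain ⟨hu₁, hu₂⟩ : 0 ≤ u.1 ∧ 0 ≤ u.2 := hu
    have hnorm : ‖u‖ ≤ u.1 + u.2 := by
      rw [Prod.norm_def, Real.norm_of_nonneg hu₁, Real.norm_of_nonneg hu₂]
      exact max_le (by linarith) (by linarith)
    have hLu : (ℓ ∘L L) u = u.1 * ℓ (L (1, 0)) + u.2 * ℓ (L (0, 1)) := by
      rw [ContinuousLinearMap.comp_apply, ← Prod.mk.eta (p := u), apply_mk, map_add, map_smul,
        map_smul, smul_eq_mul, smul_eq_mul]
    nlinarith [min_le_left (ℓ (L (1, 0))) (ℓ (L (0, 1))),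
      min_le_right (ℓ (L (1, 0))) (ℓ (L (0, 1))), lt_min hc₁ hc₂]
  have h := eventually_lt_of_hasFDerivWithinAt (s := univ) (C := {u | 0 ≤ u})
    (ℓ.hasFDerivAt.comp a hF).hasFDerivWithinAt (lt_min hc₁ hc₂) hcone
  rw [nhdsWithin_univ] at h
  filter_upwards [h] with z hz haz hza hFz
  exact (hz (sub_nonneg.2 haz) hza).not_ge (hℓ hFz)

lemma IsPMatrix.exists_descent (hL : IsPMatrix L) (hF : HasFDerivAt F L z) (h₁ : a.1 < z.1)
    (h₂ : a.2 < z.2) :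
    ∃ y, a.1 < y.1 ∧ a.2 < y.2 ∧ y ≤ z ∧ y.1 + y.2 < z.1 + z.2 ∧ F y ≤ F z := by
  obtain ⟨v, hv₁, hv₂, hLv₁, hLv₂⟩ := hL.exists_pos_apply_pos
  have hpath : HasDerivAt (fun t : ℝ => F (z - t • v)) (-L v) 0 := by
    have hline : HasDerivAt (fun t : ℝ => z - t • v) (-v) 0 := by
      simpa using ((hasDerivAt_id (0 : ℝ)).smul_const v).const_sub z
    have h := (by simpa using hF : HasFDerivAt F L (z - (0 : ℝ) • v)).comp_hasDerivAt 0 hline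
    rwa [map_neg] at h
  have hF₁ := eventually_nhdsGT_lt_of_hasDerivAt hpath.fst (by simpa using hLv₁)
  have hF₂ := eventually_nhdsGT_lt_of_hasDerivAt hpath.snd (by simpa using hLv₂)
  have hnear : ∀ᶠ t : ℝ in 𝓝 0, a.1 < (z - t • v).1 ∧ a.2 < (z - t • v).2 := by
    have hcont : Continuous fun t : ℝ => z - t • v := by fun_prop
    refine (hcont.tendsto' 0 z (by simp)).eventually (p := fun y => a.1 < y.1 ∧ a.2 < y.2) ?_
    exact ((isOpen_lt continuous_const continuous_fst).inter
      (isOpen_lt continuous_const continuous_snd)).mem_nhds ⟨h₁, h₂⟩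
  obtain ⟨t, ⟨⟨hFt₁, hFt₂⟩, hat₁, hat₂⟩, ht⟩ :=
    (((hF₁.and hF₂).and (nhdsWithin_le_nhds hnear)).and self_mem_nhdsWithin).exists
  simp only [zero_smul, sub_zero] at hFt₁ hFt₂
  have : 0 < t * v.1 := mul_pos ht hv₁
  have : 0 < t * v.2 := mul_pos ht hv₂
  refine ⟨z - t • v, hat₁, hat₂, ?_, ?_, hFt₁.le, hFt₂.le⟩
  · constructor <;> simp only [Prod.fst_sub, Prod.snd_sub, Prod.smul_fst, Prod.smul_snd,
      smul_eq_mul] <;> linarith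
  · simp only [Prod.fst_sub, Prod.snd_sub, Prod.smul_fst, Prod.smul_snd, smul_eq_mul]
    linarith

section Rectangle

variable {F' : ℝ × ℝ → ℝ × ℝ →L[ℝ] ℝ × ℝ} {s : Set (ℝ × ℝ)} {x y : ℝ × ℝ}

lemma fst_map_lt_of_snd_eq (hs : Convex ℝ s) (hF : ∀ z ∈ s, HasFDerivAt F (F' z) z)
    (hP : ∀ z ∈ s, IsPMatrix (F' z)) (hx : x ∈ s) (hy : y ∈ s) (h₂ : x.2 = y.2)
    (h₁ : x.1 < y.1) : (F x).1 < (F y).1 := by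
  refine lt_of_forall_segment_pos hs (fun z hz => (hF z hz).hasFDerivWithinAt)
    (ContinuousLinearMap.fst ℝ ℝ ℝ) hx hy fun ξ hξ => ?_
  have hyx : y - x = (y.1 - x.1) • ((1 : ℝ), (0 : ℝ)) := by ext <;> simp [h₂]
  rw [hyx, map_smul]
  exact mul_pos (sub_pos.2 h₁) (hP ξ (hs.segment_subset hx hy hξ)).1

lemma snd_map_lt_of_fst_eq (hs : Convex ℝ s) (hF : ∀ z ∈ s, HasFDerivAt F (F' z) z)
    (hP : ∀ z ∈ s, IsPMatrix (F' z)) (hx : x ∈ s) (hy : y ∈ s) (h₁ : x.1 = y.1)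
    (h₂ : x.2 < y.2) : (F x).2 < (F y).2 := by
  refine lt_of_forall_segment_pos hs (fun z hz => (hF z hz).hasFDerivWithinAt)
    (ContinuousLinearMap.snd ℝ ℝ ℝ) hx hy fun ξ hξ => ?_
  have hyx : y - x = (y.2 - x.2) • ((0 : ℝ), (1 : ℝ)) := by ext <;> simp [h₁]
  rw [hyx, map_smul]
  exact mul_pos (sub_pos.2 h₂) (hP ξ (hs.segment_subset hx hy hξ)).2.1

variable {b : ℝ × ℝ}

lemma fst_lt_and_snd_lt_of_map_le (hF : ∀ z ∈ Icc a b, HasFDerivAt F (F' z) z)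
    (hP : ∀ z ∈ Icc a b, IsPMatrix (F' z)) (hz : z ∈ Icc a b) (hza : z ≠ a) (hFz : F z ≤ F a) :
    a.1 < z.1 ∧ a.2 < z.2 := by
  have ha : a ∈ Icc a b := left_mem_Icc.2 (hz.1.trans hz.2)
  constructor
  · refine hz.1.1.lt_of_ne fun h₁ => ?_
    have h₂ : a.2 < z.2 := hz.1.2.lt_of_ne fun h₂ => hza (Prod.ext h₁.symm h₂.symm)
    exact (snd_map_lt_of_fst_eq (convex_Icc a b) hF hP ha hz h₁ h₂).not_ge hFz.2
  · refine hz.1.2.lt_of_ne fun h₂ => ?_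
    have h₁ : a.1 < z.1 := hz.1.1.lt_of_ne fun h₁ => hza (Prod.ext h₁.symm h₂.symm)
    exact (fst_map_lt_of_snd_eq (convex_Icc a b) hF hP ha hz h₂ h₁).not_ge hFz.1

theorem eq_of_le_of_map_le (hab : a ≤ b) (hF : ∀ z ∈ Icc a b, HasFDerivAt F (F' z) z)
    (hP : ∀ z ∈ Icc a b, IsPMatrix (F' z)) (hFab : F b ≤ F a) : b = a := by
  by_contra hba
  have ha : a ∈ Icc a b := left_mem_Icc.2 hab
  obtain ⟨r, hr, hiso⟩ := Metric.eventually_nhds_iff.1 ((hP a ha).eventually_not_map_le (hF a ha))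
  set T := Icc a b ∩ F ⁻¹' Iic (F a) ∩ {z | r ≤ dist z a}
  have hT : IsCompact T := by
    refine isCompact_Icc.of_isClosed_subset ?_ fun z hz => hz.1.1
    exact (ContinuousOn.preimage_isClosed_of_isClosed
      (fun z hz => (hF z hz).continuousAt.continuousWithinAt) isClosed_Icc isClosed_Iic).inter
      (isClosed_le continuous_const (continuous_id.dist continuous_const))
  have hbT : b ∈ T := ⟨⟨right_mem_Icc.2 hab, hFab⟩, not_lt.1 fun h => hiso h hab hba hFab⟩
  obtain ⟨z, ⟨⟨hz, hFz⟩, hzr⟩, hmin⟩ :=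
    hT.exists_isMinOn ⟨b, hbT⟩ (continuous_fst.add continuous_snd).continuousOn
  have hza : z ≠ a := by rintro rfl; rw [mem_ofPred_eq, dist_self] at hzr; linarith
  obtain ⟨h₁, h₂⟩ := fst_lt_and_snd_lt_of_map_le hF hP hz hza hFz
  obtain ⟨y, hy₁, hy₂, hyz, hsum, hFy⟩ := (hP z hz).exists_descent (hF z hz) h₁ h₂
  have hya : y ≠ a := fun h => (h ▸ hy₁).false
  have hyT : y ∈ T :=
    ⟨⟨⟨⟨hy₁.le, hy₂.le⟩, hyz.trans hz.2⟩, hFy.trans hFz⟩,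
      not_lt.1 fun h => hiso h ⟨hy₁.le, hy₂.le⟩ hya (hFy.trans hFz)⟩
  exact (hmin hyT).not_gt hsum

end Rectangle

def reflectSnd : (ℝ × ℝ) ≃L[ℝ] ℝ × ℝ :=
  (ContinuousLinearEquiv.refl ℝ ℝ).prodCongr (ContinuousLinearEquiv.neg ℝ : ℝ ≃L[ℝ] ℝ)

@[simp]
lemma reflectSnd_apply (z : ℝ × ℝ) : reflectSnd z = (z.1, -z.2) := rfl

lemma IsPMatrix.conj_reflectSnd (hL : IsPMatrix L) :
    IsPMatrix ((reflectSnd : ℝ × ℝ →L[ℝ] ℝ × ℝ) ∘L L ∘L (reflectSnd : ℝ × ℝ →L[ℝ] ℝ × ℝ)) := by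
  obtain ⟨h₁, h₂, h₃⟩ := hL
  have hneg : L (0, -1) = -L (0, 1) := by rw [← map_neg, Prod.neg_mk, neg_zero]
  refine ⟨?_, ?_, ?_⟩ <;>
    simp only [ContinuousLinearMap.comp_apply, ContinuousLinearEquiv.coe_coe, reflectSnd_apply,
      neg_zero, hneg, Prod.fst_neg, Prod.snd_neg, neg_neg, mul_neg, neg_mul] <;> linarith

variable {lo hi : ℝ × ℝ} {F' : ℝ × ℝ → ℝ × ℝ →L[ℝ] ℝ × ℝ}

lemma eq_of_le_of_map_eq (hF : ∀ z ∈ Icc lo hi, HasFDerivAt F (F' z) z)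
    (hP : ∀ z ∈ Icc lo hi, IsPMatrix (F' z)) {a b : ℝ × ℝ} (ha : a ∈ Icc lo hi)
    (hb : b ∈ Icc lo hi) (hab : a ≤ b) (h : F a = F b) : a = b :=
  (eq_of_le_of_map_le hab (fun z hz => hF z (Icc_subset_Icc ha.1 hb.2 hz))
    (fun z hz => hP z (Icc_subset_Icc ha.1 hb.2 hz)) h.ge).symm

lemma reflectSnd_mem_Icc_iff {z : ℝ × ℝ} :
    reflectSnd z ∈ Icc (lo.1, -hi.2) (hi.1, -lo.2) ↔ z ∈ Icc lo hi := by
  simp only [mem_Icc, Prod.le_def, reflectSnd_apply, neg_le_neg_iff]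
  tauto

theorem injOn_Icc (hF : ∀ z ∈ Icc lo hi, HasFDerivAt F (F' z) z)
    (hP : ∀ z ∈ Icc lo hi, IsPMatrix (F' z)) : InjOn F (Icc lo hi) := by
  intro a ha b hb hab
  wlog h₁ : a.1 ≤ b.1 generalizing a b
  · exact (this hb ha hab.symm (le_of_not_ge h₁)).symm
  rcases le_total a.2 b.2 with h₂ | h₂
  · exact eq_of_le_of_map_eq hF hP ha hb ⟨h₁, h₂⟩ hab
  have hρ : ∀ z ∈ Icc (lo.1, -hi.2) (hi.1, -lo.2), reflectSnd z ∈ Icc lo hi := fun z hz => by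
    rwa [← reflectSnd_mem_Icc_iff, reflectSnd_apply, reflectSnd_apply, neg_neg]
  refine reflectSnd.injective (eq_of_le_of_map_eq (F := reflectSnd ∘ F ∘ reflectSnd)
    (fun z hz => reflectSnd.hasFDerivAt.comp z ((hF _ (hρ z hz)).comp z reflectSnd.hasFDerivAt))
    (fun z hz => (hP _ (hρ z hz)).conj_reflectSnd) (reflectSnd_mem_Icc_iff.2 ha)
    (reflectSnd_mem_Icc_iff.2 hb) ⟨h₁, neg_le_neg h₂⟩ (by simp [hab]))

section Partials

variable {E : Type*} [NormedAddCommGroup E] [NormedSpace ℝ E] {f : ℝ × ℝ → E}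
  {f' : ℝ × ℝ →L[ℝ] E} {z : ℝ × ℝ}

lemma _root_.HasFDerivAt.hasDerivAt_mk_left (hf : HasFDerivAt f f' z) :
    HasDerivAt (fun t => f (t, z.2)) (f' (1, 0)) z.1 :=
  hf.comp_hasDerivAt z.1 ((hasDerivAt_id _).prodMk (hasDerivAt_const _ _))

lemma _root_.HasFDerivAt.hasDerivAt_mk_right (hf : HasFDerivAt f f' z) :
    HasDerivAt (fun t => f (z.1, t)) (f' (0, 1)) z.2 :=
  hf.comp_hasDerivAt z.2 ((hasDerivAt_const _ _).prodMk (hasDerivAt_id _))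

end Partials

lemma isPMatrix_fderiv {z : ℝ × ℝ} (hF : DifferentiableAt ℝ F z)
    (h : 0 < deriv (fun t => (F (t, z.2)).1) z.1 ∧ 0 < deriv (fun t => (F (z.1, t)).2) z.2 ∧
      0 < deriv (fun t => (F (t, z.2)).1) z.1 * deriv (fun t => (F (z.1, t)).2) z.2 -
        deriv (fun t => (F (z.1, t)).1) z.2 * deriv (fun t => (F (t, z.2)).2) z.1) :
    IsPMatrix (fderiv ℝ F z) := by
  have hl := hF.hasFDerivAt.hasDerivAt_mk_left
  have hr := hF.hasFDerivAt.hasDerivAt_mk_right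
  have hl₁ : HasDerivAt (fun t => (F (t, z.2)).1) (fderiv ℝ F z (1, 0)).1 z.1 := hl.fst
  have hl₂ : HasDerivAt (fun t => (F (t, z.2)).2) (fderiv ℝ F z (1, 0)).2 z.1 := hl.snd
  have hr₁ : HasDerivAt (fun t => (F (z.1, t)).1) (fderiv ℝ F z (0, 1)).1 z.2 := hr.fst
  have hr₂ : HasDerivAt (fun t => (F (z.1, t)).2) (fderiv ℝ F z (0, 1)).2 z.2 := hr.snd
  rwa [hl₁.deriv, hl₂.deriv, hr₁.deriv, hr₂.deriv] at h

end GaleNikaido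

theorem stmt_14_general (α₁ β₁ α₂ β₂ : ℝ)
    (F : ℝ × ℝ → ℝ × ℝ) (U : Set (ℝ × ℝ)) (hU : IsOpen U)
    (hRU : Set.Icc α₁ β₁ ×ˢ Set.Icc α₂ β₂ ⊆ U)
    (hF : ContDiffOn ℝ 1 F U)
    (hP : ∀ x ∈ Set.Icc α₁ β₁ ×ˢ Set.Icc α₂ β₂,
      0 < deriv (fun t => (F (t, x.2)).1) x.1 ∧
      0 < deriv (fun t => (F (x.1, t)).2) x.2 ∧
      0 < deriv (fun t => (F (t, x.2)).1) x.1 * deriv (fun t => (F (x.1, t)).2) x.2 -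
          deriv (fun t => (F (x.1, t)).1) x.2 * deriv (fun t => (F (t, x.2)).2) x.1) :
    Set.InjOn F (Set.Icc α₁ β₁ ×ˢ Set.Icc α₂ β₂) := by
  have hdiff : ∀ z ∈ Set.Icc α₁ β₁ ×ˢ Set.Icc α₂ β₂, DifferentiableAt ℝ F z := fun z hz =>
    (hF.contDiffAt (hU.mem_nhds (hRU hz))).differentiableAt one_ne_zero
  rw [Set.Icc_prod_Icc] at hdiff hP ⊢
  exact GaleNikaido.injOn_Icc (fun z hz => (hdiff z hz).hasFDerivAt)
    fun z hz => GaleNikaido.isPMatrix_fderiv (hdiff z hz) (hP z hz)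

/-- Gale–Nikaidô univalence criterion in the plane: let
`R = [α₁, β₁] × [α₂, β₂] ⊂ ℝ²` and let `F = (F₁, F₂) : ℝ² → ℝ²` be continuously
differentiable on an open set containing `R`.  If at every point `x ∈ R` the Jacobian
matrix is a P-matrix, i.e. `∂F₁/∂x₁(x) > 0`, `∂F₂/∂x₂(x) > 0` and `det DF(x) > 0`,
then `F` is injective on `R`. -/
theorem stmt_14 (α₁ β₁ α₂ β₂ : ℝ) (h₁ : α₁ ≤ β₁) (h₂ : α₂ ≤ β₂)
    (F : ℝ × ℝ → ℝ × ℝ) (U : Set (ℝ × ℝ)) (hU : IsOpen U)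
    (hRU : Set.Icc α₁ β₁ ×ˢ Set.Icc α₂ β₂ ⊆ U)
    (hF : ContDiffOn ℝ 1 F U)
    (hP : ∀ x ∈ Set.Icc α₁ β₁ ×ˢ Set.Icc α₂ β₂,
      0 < deriv (fun t => (F (t, x.2)).1) x.1 ∧
      0 < deriv (fun t => (F (x.1, t)).2) x.2 ∧
      0 < deriv (fun t => (F (t, x.2)).1) x.1 * deriv (fun t => (F (x.1, t)).2) x.2 -
          deriv (fun t => (F (x.1, t)).1) x.2 * deriv (fun t => (F (t, x.2)).2) x.1) :
    Set.InjOn F (Set.Icc α₁ β₁ ×ˢ Set.Icc α₂ β₂) :=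
  stmt_14_general α₁ β₁ α₂ β₂ F U hU hRU hF hP
end
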